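/- arXiv:1403.7732 — 4 statements merged into one kernel-verified Lean document; each statement's English description precedes it below -/
import Mathlib

section
/- Let X₁, X₂ be complex Banach spaces, X := X₁ × X₂, and let 𝒜 = (A_{jk}), ℬ = (B_{jk}) be block operator matrices on X, inducing operators 𝒜, ℬ on X. Let 𝒜ℬ denote the composition of the induced operators, with domain {x ∈ D(ℬ) : ℬx ∈ D(𝒜)}, and let 𝒜×ℬ denote the operator induced by the formal product block operator matrix. Then 𝒜×ℬ = 𝒜ℬ (equality of operators, including domains) if and only if 𝒜ℬ has a matrix representation. -/
open LinearPMap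
open scoped LinearPMap

namespace BlockOp

variable {E F G X₁ X₂ Y₁ Y₂ : Type*}
  [AddCommGroup E] [Module ℂ E] [AddCommGroup F] [Module ℂ F] [AddCommGroup G] [Module ℂ G]
  [AddCommGroup X₁] [Module ℂ X₁] [AddCommGroup X₂] [Module ℂ X₂]
  [AddCommGroup Y₁] [Module ℂ Y₁] [AddCommGroup Y₂] [Module ℂ Y₂]

/-- The operator on `X₁ × X₂` induced by a block operator matrix `[[A, B], [C, D]]`. -/
noncomputable def blockOp (A : X₁ →ₗ.[ℂ] Y₁) (B : X₂ →ₗ.[ℂ] Y₁)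
    (C : X₁ →ₗ.[ℂ] Y₂) (D : X₂ →ₗ.[ℂ] Y₂) : (X₁ × X₂) →ₗ.[ℂ] (Y₁ × Y₂) where
  domain := (A.domain ⊓ C.domain).prod (B.domain ⊓ D.domain)
  toFun := LinearMap.prod
    (A.toFun ∘ₗ Submodule.inclusion inf_le_left ∘ₗ
        (LinearMap.fst ℂ X₁ X₂).restrict
          (p := (A.domain ⊓ C.domain).prod (B.domain ⊓ D.domain))
          (q := A.domain ⊓ C.domain) (fun _ hx => hx.1)
      + B.toFun ∘ₗ Submodule.inclusion inf_le_left ∘ₗ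
        (LinearMap.snd ℂ X₁ X₂).restrict
          (p := (A.domain ⊓ C.domain).prod (B.domain ⊓ D.domain))
          (q := B.domain ⊓ D.domain) (fun _ hx => hx.2))
    (C.toFun ∘ₗ Submodule.inclusion inf_le_right ∘ₗ
        (LinearMap.fst ℂ X₁ X₂).restrict
          (p := (A.domain ⊓ C.domain).prod (B.domain ⊓ D.domain))
          (q := A.domain ⊓ C.domain) (fun _ hx => hx.1)
      + D.toFun ∘ₗ Submodule.inclusion inf_le_right ∘ₗ
        (LinearMap.snd ℂ X₁ X₂).restrict
          (p := (A.domain ⊓ C.domain).prod (B.domain ⊓ D.domain))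
          (q := B.domain ⊓ D.domain) (fun _ hx => hx.2))

/-- A linear operator on a product space has a matrix representation if it is induced
by some block operator matrix. -/
def HasMatrixRep (T : (X₁ × X₂) →ₗ.[ℂ] (Y₁ × Y₂)) : Prop :=
  ∃ (A : X₁ →ₗ.[ℂ] Y₁) (B : X₂ →ₗ.[ℂ] Y₁) (C : X₁ →ₗ.[ℂ] Y₂) (D : X₂ →ₗ.[ℂ] Y₂),
    T = blockOp A B C D

/-- The composition of two partially defined operators, with its natural domain
`{x ∈ D(B) : B x ∈ D(A)}`. -/
noncomputable def pcomp (A : F →ₗ.[ℂ] G) (B : E →ₗ.[ℂ] F) : E →ₗ.[ℂ] G where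
  domain :=
    { carrier := {x | ∃ hx : x ∈ B.domain, B ⟨x, hx⟩ ∈ A.domain}
      zero_mem' := ⟨B.domain.zero_mem, by
        have : (⟨0, B.domain.zero_mem⟩ : B.domain) = 0 := rfl
        rw [this, LinearPMap.map_zero]; exact A.domain.zero_mem⟩
      add_mem' := by
        rintro a b ⟨ha, ha'⟩ ⟨hb, hb'⟩
        refine ⟨add_mem ha hb, ?_⟩
        have : (⟨a + b, add_mem ha hb⟩ : B.domain) = ⟨a, ha⟩ + ⟨b, hb⟩ := rfl
        rw [this, LinearPMap.map_add]
        exact add_mem ha' hb'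
      smul_mem' := by
        rintro c a ⟨ha, ha'⟩
        refine ⟨Submodule.smul_mem _ c ha, ?_⟩
        have : (⟨c • a, Submodule.smul_mem _ c ha⟩ : B.domain) = c • (⟨a, ha⟩ : B.domain) := rfl
        rw [this, LinearPMap.map_smul]
        exact Submodule.smul_mem _ c ha' }
  toFun := A.toFun ∘ₗ LinearMap.codRestrict A.domain
      (B.toFun ∘ₗ
        { toFun := fun x => (⟨(x : E), x.2.choose⟩ : B.domain)
          map_add' := fun x y => Subtype.ext rfl
          map_smul' := fun c x => Subtype.ext rfl })
      (fun x => x.2.choose_spec)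

end BlockOp

namespace BlockOp

section Transport

variable {E F G E' F' : Type*}
  [AddCommGroup E] [Module ℂ E] [AddCommGroup F] [Module ℂ F] [AddCommGroup G] [Module ℂ G]
  [AddCommGroup E'] [Module ℂ E'] [AddCommGroup F'] [Module ℂ F']

/-- Transport a partially defined linear map along linear equivalences. -/
noncomputable def pmapCongr (e : E ≃ₗ[ℂ] E') (T : E' →ₗ.[ℂ] F') (e' : F' ≃ₗ[ℂ] F) :
    E →ₗ.[ℂ] F where
  domain := T.domain.comap (e : E →ₗ[ℂ] E')
  toFun := (e' : F' →ₗ[ℂ] F) ∘ₗ T.toFun ∘ₗ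
    ((e : E →ₗ[ℂ] E').restrict (p := T.domain.comap (e : E →ₗ[ℂ] E')) (q := T.domain)
      (fun _ hx => hx))

end Transport

section Corners

variable {X₁ X₂ Y₁ Y₂ : Type*}
  [AddCommGroup X₁] [Module ℂ X₁] [AddCommGroup X₂] [Module ℂ X₂]
  [AddCommGroup Y₁] [Module ℂ Y₁] [AddCommGroup Y₂] [Module ℂ Y₂]

/-- The upper-left corner `P₁ 𝒜 J₁` of an operator on a product space, with domain
`{x₁ : (x₁, 0) ∈ D(𝒜)}`. -/
noncomputable def corner₁₁ (T : (X₁ × X₂) →ₗ.[ℂ] (Y₁ × Y₂)) : X₁ →ₗ.[ℂ] Y₁ where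
  domain := T.domain.comap (LinearMap.inl ℂ X₁ X₂)
  toFun := LinearMap.fst ℂ Y₁ Y₂ ∘ₗ T.toFun ∘ₗ
    ((LinearMap.inl ℂ X₁ X₂).restrict (p := T.domain.comap (LinearMap.inl ℂ X₁ X₂))
      (q := T.domain) (fun _ hx => hx))

/-- The lower-left corner `P₂ 𝒜 J₁`. -/
noncomputable def corner₂₁ (T : (X₁ × X₂) →ₗ.[ℂ] (Y₁ × Y₂)) : X₁ →ₗ.[ℂ] Y₂ where
  domain := T.domain.comap (LinearMap.inl ℂ X₁ X₂)
  toFun := LinearMap.snd ℂ Y₁ Y₂ ∘ₗ T.toFun ∘ₗ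
    ((LinearMap.inl ℂ X₁ X₂).restrict (p := T.domain.comap (LinearMap.inl ℂ X₁ X₂))
      (q := T.domain) (fun _ hx => hx))

/-- The upper-right corner `P₁ 𝒜 J₂`. -/
noncomputable def corner₁₂ (T : (X₁ × X₂) →ₗ.[ℂ] (Y₁ × Y₂)) : X₂ →ₗ.[ℂ] Y₁ where
  domain := T.domain.comap (LinearMap.inr ℂ X₁ X₂)
  toFun := LinearMap.fst ℂ Y₁ Y₂ ∘ₗ T.toFun ∘ₗ
    ((LinearMap.inr ℂ X₁ X₂).restrict (p := T.domain.comap (LinearMap.inr ℂ X₁ X₂))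
      (q := T.domain) (fun _ hx => hx))

/-- The lower-right corner `P₂ 𝒜 J₂`. -/
noncomputable def corner₂₂ (T : (X₁ × X₂) →ₗ.[ℂ] (Y₁ × Y₂)) : X₂ →ₗ.[ℂ] Y₂ where
  domain := T.domain.comap (LinearMap.inr ℂ X₁ X₂)
  toFun := LinearMap.snd ℂ Y₁ Y₂ ∘ₗ T.toFun ∘ₗ
    ((LinearMap.inr ℂ X₁ X₂).restrict (p := T.domain.comap (LinearMap.inr ℂ X₁ X₂))
      (q := T.domain) (fun _ hx => hx))

end Corners

section Shift

variable {E : Type*} [AddCommGroup E] [Module ℂ E]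

/-- `T - λ`, i.e. `T - λ·I`, with domain `D(T)`. -/
noncomputable def shift (T : E →ₗ.[ℂ] E) (lam : ℂ) : E →ₗ.[ℂ] E :=
  T - (lam • (LinearMap.id : E →ₗ[ℂ] E)).toPMap ⊤

/-- The identity as a partially defined operator with full domain. -/
noncomputable def idP (E : Type*) [AddCommGroup E] [Module ℂ E] : E →ₗ.[ℂ] E :=
  (LinearMap.id : E →ₗ[ℂ] E).toPMap ⊤

end Shift

section Resolvent

variable {E : Type*} [NormedAddCommGroup E] [NormedSpace ℂ E]

/-- `R` is the (bounded, everywhere defined) inverse of `T - λ`;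
this witnesses that `λ` belongs to the resolvent set of `T`. -/
structure IsResolventAt (T : E →ₗ.[ℂ] E) (lam : ℂ) (R : E →L[ℂ] E) : Prop where
  mem : ∀ y, R y ∈ T.domain
  right_inv : ∀ y, T ⟨R y, mem y⟩ - lam • (R y) = y
  left_inv : ∀ x : T.domain, R (T x - lam • (x : E)) = x

/-- The resolvent set of `T`: those `λ ∈ ℂ` for which `T - λ` is a bijection from `D(T)`
onto the whole space with bounded inverse. -/
def resolventSet (T : E →ₗ.[ℂ] E) : Set ℂ :=
  {lam | ∃ R : E →L[ℂ] E, IsResolventAt T lam R}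

end Resolvent

section RelativeBound

variable {E F G : Type*} [NormedAddCommGroup E] [NormedSpace ℂ E]
  [NormedAddCommGroup F] [NormedSpace ℂ F] [NormedAddCommGroup G] [NormedSpace ℂ G]

/-- `S` is `T`-bounded with constants `a`, `b`:
`D(T) ⊆ D(S)` and `‖S x‖ ≤ a ‖x‖ + b ‖T x‖` on `D(T)`. -/
structure RelBound (S : E →ₗ.[ℂ] G) (T : E →ₗ.[ℂ] F) (a b : ℝ) : Prop where
  dom_le : T.domain ≤ S.domain
  bound : ∀ x : T.domain, ‖S ⟨(x : E), dom_le x.2⟩‖ ≤ a * ‖(x : E)‖ + b * ‖T x‖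

/-- `S` is `T`-bounded with relative bound `< c`. -/
def IsRelBoundedLt (S : E →ₗ.[ℂ] G) (T : E →ₗ.[ℂ] F) (c : ℝ) : Prop :=
  ∃ b, 0 ≤ b ∧ b < c ∧ ∃ a, 0 ≤ a ∧ RelBound S T a b

/-- `S` is `T`-bounded with relative bound `≤ c` (for `c = 0`: relative bound `0`). -/
def IsRelBoundedLe (S : E →ₗ.[ℂ] G) (T : E →ₗ.[ℂ] F) (c : ℝ) : Prop :=
  ∀ b, c < b → ∃ a, 0 ≤ a ∧ RelBound S T a b

end RelativeBound

section HilbertProduct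

variable {H₁ H₂ K₁ K₂ : Type*}
  [NormedAddCommGroup H₁] [InnerProductSpace ℂ H₁]
  [NormedAddCommGroup H₂] [InnerProductSpace ℂ H₂]
  [NormedAddCommGroup K₁] [InnerProductSpace ℂ K₁]
  [NormedAddCommGroup K₂] [InnerProductSpace ℂ K₂]

/-- The operator induced by a block operator matrix on the Hilbert space
`H₁ ×_{ℓ²} H₂`, i.e. `WithLp 2 (H₁ × H₂)`. -/
noncomputable def blockOpL (A : H₁ →ₗ.[ℂ] K₁) (B : H₂ →ₗ.[ℂ] K₁)
    (C : H₁ →ₗ.[ℂ] K₂) (D : H₂ →ₗ.[ℂ] K₂) :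
    WithLp 2 (H₁ × H₂) →ₗ.[ℂ] WithLp 2 (K₁ × K₂) :=
  pmapCongr (WithLp.linearEquiv 2 ℂ (H₁ × H₂)) (blockOp A B C D)
    (WithLp.linearEquiv 2 ℂ (K₁ × K₂)).symm

/-- A linear operator on `H₁ ×_{ℓ²} H₂` has a matrix representation if it is induced by
some block operator matrix. -/
def HasMatrixRepL (T : WithLp 2 (H₁ × H₂) →ₗ.[ℂ] WithLp 2 (K₁ × K₂)) : Prop :=
  ∃ (A : H₁ →ₗ.[ℂ] K₁) (B : H₂ →ₗ.[ℂ] K₁) (C : H₁ →ₗ.[ℂ] K₂) (D : H₂ →ₗ.[ℂ] K₂),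
    T = blockOpL A B C D

end HilbertProduct

section EssSelfAdjoint

variable {E : Type*} [NormedAddCommGroup E] [InnerProductSpace ℂ E] [CompleteSpace E]

/-- An operator is essentially self-adjoint if it is closable and its closure is
self-adjoint. -/
def IsEssentiallySelfAdjoint (T : E →ₗ.[ℂ] E) : Prop :=
  T.IsClosable ∧ IsSelfAdjoint T.closure

end EssSelfAdjoint

end BlockOp

/-! The formal product `𝒜×ℬ` is always a restriction of `𝒜ℬ`: on its domain both send `x` to
`(A_{j1}(B₁₁x₁ + B₁₂x₂) + A_{j2}(B₂₁x₁ + B₂₂x₂))_j`. Its domain consists of the `x` for which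
`(x₁, 0)` and `(0, x₂)` both lie in `D(𝒜ℬ)`, so the two operators coincide as soon as `D(𝒜ℬ)`
splits along the coordinates, which it does whenever `𝒜ℬ` has a matrix representation. -/

namespace BlockOp

variable {E F G X₁ X₂ Y₁ Y₂ Z₁ Z₂ : Type*}
  [AddCommGroup E] [Module ℂ E] [AddCommGroup F] [Module ℂ F] [AddCommGroup G] [Module ℂ G]
  [AddCommGroup X₁] [Module ℂ X₁] [AddCommGroup X₂] [Module ℂ X₂]
  [AddCommGroup Y₁] [Module ℂ Y₁] [AddCommGroup Y₂] [Module ℂ Y₂]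
  [AddCommGroup Z₁] [Module ℂ Z₁] [AddCommGroup Z₂] [Module ℂ Z₂]

theorem apply_mk_add (f : E →ₗ.[ℂ] F) {x y : E} (hx : x ∈ f.domain) (hy : y ∈ f.domain)
    (hxy : x + y ∈ f.domain) : f ⟨x + y, hxy⟩ = f ⟨x, hx⟩ + f ⟨y, hy⟩ :=
  f.map_add ⟨x, hx⟩ ⟨y, hy⟩

theorem pcomp_apply {A : F →ₗ.[ℂ] G} {B : E →ₗ.[ℂ] F} (x : E) (hx : x ∈ (pcomp A B).domain) :
    pcomp A B ⟨x, hx⟩ = A ⟨B ⟨x, hx.1⟩, hx.2⟩ := rfl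

section BlockOp

variable {A : X₁ →ₗ.[ℂ] Y₁} {B : X₂ →ₗ.[ℂ] Y₁} {C : X₁ →ₗ.[ℂ] Y₂} {D : X₂ →ₗ.[ℂ] Y₂}

theorem blockOp_apply (x : X₁ × X₂) (hx : x ∈ (blockOp A B C D).domain) :
    blockOp A B C D ⟨x, hx⟩ =
      (A ⟨x.1, hx.1.1⟩ + B ⟨x.2, hx.2.1⟩, C ⟨x.1, hx.1.2⟩ + D ⟨x.2, hx.2.2⟩) := rfl

theorem blockOp_apply_inl (x₁ : X₁) (hx : (x₁, 0) ∈ (blockOp A B C D).domain) :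
    blockOp A B C D ⟨(x₁, 0), hx⟩ = (A ⟨x₁, hx.1.1⟩, C ⟨x₁, hx.1.2⟩) := by
  simpa [blockOp_apply] using ⟨B.map_zero, D.map_zero⟩

theorem blockOp_apply_inr (x₂ : X₂) (hx : (0, x₂) ∈ (blockOp A B C D).domain) :
    blockOp A B C D ⟨(0, x₂), hx⟩ = (B ⟨x₂, hx.2.1⟩, D ⟨x₂, hx.2.2⟩) := by
  simpa [blockOp_apply] using ⟨A.map_zero, C.map_zero⟩

end BlockOp

theorem HasMatrixRep.inl_inr_mem_domain {T : (X₁ × X₂) →ₗ.[ℂ] (Y₁ × Y₂)}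
    (hT : HasMatrixRep T) {x : X₁ × X₂} (hx : x ∈ T.domain) :
    (x.1, 0) ∈ T.domain ∧ (0, x.2) ∈ T.domain := by
  obtain ⟨A, B, C, D, rfl⟩ := hT
  exact ⟨⟨hx.1, zero_mem _⟩, ⟨zero_mem _, hx.2⟩⟩

section FormalProduct

variable (A₁₁ : Y₁ →ₗ.[ℂ] Z₁) (A₁₂ : Y₂ →ₗ.[ℂ] Z₁) (A₂₁ : Y₁ →ₗ.[ℂ] Z₂) (A₂₂ : Y₂ →ₗ.[ℂ] Z₂)
  (B₁₁ : X₁ →ₗ.[ℂ] Y₁) (B₁₂ : X₂ →ₗ.[ℂ] Y₁) (B₂₁ : X₁ →ₗ.[ℂ] Y₂) (B₂₂ : X₂ →ₗ.[ℂ] Y₂)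

local notation "𝒜" => blockOp A₁₁ A₁₂ A₂₁ A₂₂
local notation "ℬ" => blockOp B₁₁ B₁₂ B₂₁ B₂₂
local notation "𝒜×ℬ" => blockOp (pcomp A₁₁ B₁₁ + pcomp A₁₂ B₂₁) (pcomp A₁₁ B₁₂ + pcomp A₁₂ B₂₂) (pcomp A₂₁ B₁₁ + pcomp A₂₂ B₂₁) (pcomp A₂₁ B₁₂ + pcomp A₂₂ B₂₂)

theorem blockOp_pcomp_le_pcomp_blockOp : 𝒜×ℬ ≤ pcomp 𝒜 ℬ := by
  refine ⟨fun x ⟨⟨⟨⟨hb11, ha11⟩, ⟨hb21, ha12⟩⟩, ⟨⟨_, ha21⟩, ⟨_, ha22⟩⟩⟩,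
      ⟨⟨⟨hb12, ha11'⟩, ⟨hb22, ha12'⟩⟩, ⟨⟨_, ha21'⟩, ⟨_, ha22'⟩⟩⟩⟩ =>
    ⟨⟨⟨hb11, hb21⟩, ⟨hb12, hb22⟩⟩,
      ⟨⟨add_mem ha11 ha11', add_mem ha21 ha21'⟩, ⟨add_mem ha12 ha12', add_mem ha22 ha22'⟩⟩⟩, ?_⟩
  rintro ⟨x, hx⟩ ⟨_, _⟩ rfl
  obtain ⟨⟨⟨⟨_, ha11⟩, ⟨_, ha12⟩⟩, ⟨⟨_, ha21⟩, ⟨_, ha22⟩⟩⟩,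
      ⟨⟨⟨_, ha11'⟩, ⟨_, ha12'⟩⟩, ⟨⟨_, ha21'⟩, ⟨_, ha22'⟩⟩⟩⟩ := id hx
  simp only [LinearPMap.add_apply, pcomp_apply, blockOp_apply]
  rw [apply_mk_add A₁₁ ha11 ha11', apply_mk_add A₁₂ ha12 ha12', apply_mk_add A₂₁ ha21 ha21',
    apply_mk_add A₂₂ ha22 ha22']
  exact Prod.ext (add_add_add_comm ..) (add_add_add_comm ..)

variable {A₁₁ A₁₂ A₂₁ A₂₂ B₁₁ B₁₂ B₂₁ B₂₂} in
theorem mem_blockOp_pcomp_domain {x : X₁ × X₂} (h₁ : (x.1, 0) ∈ (pcomp 𝒜 ℬ).domain)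
    (h₂ : (0, x.2) ∈ (pcomp 𝒜 ℬ).domain) : x ∈ (𝒜×ℬ).domain := by
  obtain ⟨hb₁, ha₁⟩ := h₁
  obtain ⟨hb₂, ha₂⟩ := h₂
  rw [blockOp_apply_inl] at ha₁
  rw [blockOp_apply_inr] at ha₂
  exact ⟨⟨⟨⟨hb₁.1.1, ha₁.1.1⟩, ⟨hb₁.1.2, ha₁.2.1⟩⟩, ⟨⟨hb₁.1.1, ha₁.1.2⟩, ⟨hb₁.1.2, ha₁.2.2⟩⟩⟩,
    ⟨⟨⟨hb₂.2.1, ha₂.1.1⟩, ⟨hb₂.2.2, ha₂.2.1⟩⟩, ⟨⟨hb₂.2.1, ha₂.1.2⟩, ⟨hb₂.2.2, ha₂.2.2⟩⟩⟩⟩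

theorem blockOp_pcomp_eq_pcomp_blockOp_iff :
    𝒜×ℬ = pcomp 𝒜 ℬ ↔ HasMatrixRep (pcomp 𝒜 ℬ) := by
  refine ⟨fun h => ⟨_, _, _, _, h.symm⟩, fun hT => ?_⟩
  have hle := blockOp_pcomp_le_pcomp_blockOp A₁₁ A₁₂ A₂₁ A₂₂ B₁₁ B₁₂ B₂₁ B₂₂
  refine LinearPMap.eq_of_le_of_domain_eq hle (le_antisymm hle.1 fun x hx => ?_)
  obtain ⟨h₁, h₂⟩ := hT.inl_inr_mem_domain hx
  exact mem_blockOp_pcomp_domain h₁ h₂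

end FormalProduct

end BlockOp

namespace BlockOp

theorem statement1_general {X₁ X₂ : Type*}
    [NormedAddCommGroup X₁] [NormedSpace ℂ X₁]
    [NormedAddCommGroup X₂] [NormedSpace ℂ X₂]
    (A₁₁ : X₁ →ₗ.[ℂ] X₁) (A₁₂ : X₂ →ₗ.[ℂ] X₁) (A₂₁ : X₁ →ₗ.[ℂ] X₂) (A₂₂ : X₂ →ₗ.[ℂ] X₂)
    (B₁₁ : X₁ →ₗ.[ℂ] X₁) (B₁₂ : X₂ →ₗ.[ℂ] X₁) (B₂₁ : X₁ →ₗ.[ℂ] X₂) (B₂₂ : X₂ →ₗ.[ℂ] X₂) :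
    blockOp (pcomp A₁₁ B₁₁ + pcomp A₁₂ B₂₁) (pcomp A₁₁ B₁₂ + pcomp A₁₂ B₂₂)
        (pcomp A₂₁ B₁₁ + pcomp A₂₂ B₂₁) (pcomp A₂₁ B₁₂ + pcomp A₂₂ B₂₂) =
      pcomp (blockOp A₁₁ A₁₂ A₂₁ A₂₂) (blockOp B₁₁ B₁₂ B₂₁ B₂₂) ↔
    HasMatrixRep (pcomp (blockOp A₁₁ A₁₂ A₂₁ A₂₂) (blockOp B₁₁ B₁₂ B₂₁ B₂₂)) :=
  blockOp_pcomp_eq_pcomp_blockOp_iff A₁₁ A₁₂ A₂₁ A₂₂ B₁₁ B₁₂ B₂₁ B₂₂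

theorem statement1 {X₁ X₂ : Type*}
    [NormedAddCommGroup X₁] [NormedSpace ℂ X₁] [CompleteSpace X₁]
    [NormedAddCommGroup X₂] [NormedSpace ℂ X₂] [CompleteSpace X₂]
    (A₁₁ : X₁ →ₗ.[ℂ] X₁) (A₁₂ : X₂ →ₗ.[ℂ] X₁) (A₂₁ : X₁ →ₗ.[ℂ] X₂) (A₂₂ : X₂ →ₗ.[ℂ] X₂)
    (B₁₁ : X₁ →ₗ.[ℂ] X₁) (B₁₂ : X₂ →ₗ.[ℂ] X₁) (B₂₁ : X₁ →ₗ.[ℂ] X₂) (B₂₂ : X₂ →ₗ.[ℂ] X₂) :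
    blockOp (pcomp A₁₁ B₁₁ + pcomp A₁₂ B₂₁) (pcomp A₁₁ B₁₂ + pcomp A₁₂ B₂₂)
        (pcomp A₂₁ B₁₁ + pcomp A₂₂ B₂₁) (pcomp A₂₁ B₁₂ + pcomp A₂₂ B₂₂) =
      pcomp (blockOp A₁₁ A₁₂ A₂₁ A₂₂) (blockOp B₁₁ B₁₂ B₂₁ B₂₂) ↔
    HasMatrixRep (pcomp (blockOp A₁₁ A₁₂ A₂₁ A₂₂) (blockOp B₁₁ B₁₂ B₂₁ B₂₂)) :=
  statement1_general A₁₁ A₁₂ A₂₁ A₂₂ B₁₁ B₁₂ B₂₁ B₂₂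

end BlockOp
end

section
/- Let H₁, H₂ be complex Hilbert spaces, H := H₁ × H₂, and let 𝒜 = [[A, B],[C, D]] be a block operator matrix on H such that D(A) = D(C) =: D₁ is dense in H₁ and D(B) = D(D) =: D₂ is dense in H₂ (so D(𝒜) = D₁ × D₂ is dense in H). Let 𝒜^× denote the formal adjoint block operator matrix, i.e., the operator induced by [[A*, C*],[B*, D*]], with domain (D(A*) ∩ D(B*)) × (D(C*) ∩ D(D*)). Then 𝒜^× = 𝒜* (equality of operators, including domains) if and only if 𝒜* has a matrix representation, i.e., D(𝒜*) = P₁D(𝒜*) × P₂D(𝒜*) for the coordinate projections P₁, P₂. -/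
open LinearPMap
open scoped LinearPMap

namespace BlockOp

/-!
The formal adjoint `𝒜^×` is always a restriction of `𝒜*`, because every entry `T` satisfies
`⟪T x, y⟫ = ⟪x, T* y⟫` on its domain. Conversely, if `D(𝒜*)` is a product, then for
`y ∈ D(𝒜*)` both `(y₁, 0)` and `(0, y₂)` lie in `D(𝒜*)`. Testing `𝒜* (y₁, 0)` against the
vectors `(x₁, 0)` and `(0, x₂)` of `D(𝒜)` separates the entries: it shows
`y₁ ∈ D(A*) ∩ D(B*)`, and likewise `y₂ ∈ D(C*) ∩ D(D*)`. So `D(𝒜*) ⊆ D(𝒜^×)`.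
-/

section

variable {H₁ H₂ K₁ K₂ : Type*}
  [NormedAddCommGroup H₁] [InnerProductSpace ℂ H₁] [NormedAddCommGroup H₂] [InnerProductSpace ℂ H₂]
  [NormedAddCommGroup K₁] [InnerProductSpace ℂ K₁] [NormedAddCommGroup K₂] [InnerProductSpace ℂ K₂]
  {A : H₁ →ₗ.[ℂ] K₁} {B : H₂ →ₗ.[ℂ] K₁} {C : H₁ →ₗ.[ℂ] K₂} {D : H₂ →ₗ.[ℂ] K₂}

theorem mem_blockOpL_domain {x : WithLp 2 (H₁ × H₂)} :
    x ∈ (blockOpL A B C D).domain ↔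
      (x.fst ∈ A.domain ∧ x.fst ∈ C.domain) ∧ (x.snd ∈ B.domain ∧ x.snd ∈ D.domain) :=
  Iff.rfl

theorem blockOpL_apply {x : WithLp 2 (H₁ × H₂)} (hx : x ∈ (blockOpL A B C D).domain) :
    blockOpL A B C D ⟨x, hx⟩ =
      WithLp.toLp 2 (A ⟨x.fst, hx.1.1⟩ + B ⟨x.snd, hx.2.1⟩, C ⟨x.fst, hx.1.2⟩ + D ⟨x.snd, hx.2.2⟩) :=
  rfl

theorem blockOpL_apply_inl {x₁ : H₁} (hx : WithLp.toLp 2 (x₁, 0) ∈ (blockOpL A B C D).domain) :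
    blockOpL A B C D ⟨_, hx⟩ = WithLp.toLp 2 (A ⟨x₁, hx.1.1⟩, C ⟨x₁, hx.1.2⟩) := by
  have hB : B ⟨0, hx.2.1⟩ = 0 := B.map_zero
  have hD : D ⟨0, hx.2.2⟩ = 0 := D.map_zero
  simp only [blockOpL_apply, WithLp.toLp_fst, WithLp.toLp_snd, hB, hD, add_zero]

theorem blockOpL_apply_inr {x₂ : H₂} (hx : WithLp.toLp 2 (0, x₂) ∈ (blockOpL A B C D).domain) :
    blockOpL A B C D ⟨_, hx⟩ = WithLp.toLp 2 (B ⟨x₂, hx.2.1⟩, D ⟨x₂, hx.2.2⟩) := by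
  have hA : A ⟨0, hx.1.1⟩ = 0 := A.map_zero
  have hC : C ⟨0, hx.1.2⟩ = 0 := C.map_zero
  simp only [blockOpL_apply, WithLp.toLp_fst, WithLp.toLp_snd, hA, hC, zero_add]

theorem dense_blockOpL_domain (hAC : A.domain = C.domain) (hBD : B.domain = D.domain)
    (h1 : Dense (A.domain : Set H₁)) (h2 : Dense (B.domain : Set H₂)) :
    Dense ((blockOpL A B C D).domain : Set (WithLp 2 (H₁ × H₂))) := by
  have hdom : ((blockOpL A B C D).domain : Set (WithLp 2 (H₁ × H₂))) =
      WithLp.ofLp ⁻¹' ((A.domain : Set H₁) ×ˢ (B.domain : Set H₂)) := by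
    ext x
    simp [mem_blockOpL_domain, ← hAC, ← hBD]
  rw [hdom]
  exact (h1.prod h2).preimage (WithLp.homeomorphProd 2 H₁ H₂).isOpenMap

theorem HasMatrixRepL.mem_domain_iff {T : WithLp 2 (H₁ × H₂) →ₗ.[ℂ] WithLp 2 (K₁ × K₂)} (hT : HasMatrixRepL T)
    {x : WithLp 2 (H₁ × H₂)} :
    x ∈ T.domain ↔ WithLp.toLp 2 (x.fst, 0) ∈ T.domain ∧ WithLp.toLp 2 (0, x.snd) ∈ T.domain := by
  obtain ⟨A, B, C, D, rfl⟩ := hT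
  simp only [mem_blockOpL_domain, WithLp.toLp_fst, WithLp.toLp_snd, zero_mem, and_true, true_and]

section Adjoint

open scoped InnerProductSpace

variable [CompleteSpace H₁] [CompleteSpace H₂]

theorem blockOpL_isFormalAdjoint (hA : Dense (A.domain : Set H₁)) (hB : Dense (B.domain : Set H₂))
    (hC : Dense (C.domain : Set H₁)) (hD : Dense (D.domain : Set H₂)) :
    (blockOpL A B C D).IsFormalAdjoint (blockOpL A† C† B† D†) := by
  rintro ⟨x, hx⟩ ⟨y, hy⟩
  have hA' := (A.adjoint_isFormalAdjoint hA).symm ⟨x.fst, hx.1.1⟩ ⟨y.fst, hy.1.1⟩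
  have hB' := (B.adjoint_isFormalAdjoint hB).symm ⟨x.snd, hx.2.1⟩ ⟨y.fst, hy.1.2⟩
  have hC' := (C.adjoint_isFormalAdjoint hC).symm ⟨x.fst, hx.1.2⟩ ⟨y.snd, hy.2.1⟩
  have hD' := (D.adjoint_isFormalAdjoint hD).symm ⟨x.snd, hx.2.2⟩ ⟨y.snd, hy.2.2⟩
  simp only [blockOpL_apply, WithLp.prod_inner_apply, WithLp.ofLp_fst,
    WithLp.ofLp_snd, inner_add_left, inner_add_right]
  rw [hA', hB', hC', hD']
  ring

theorem inner_adjoint_blockOpL_inl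
    (hdense : Dense ((blockOpL A B C D).domain : Set (WithLp 2 (H₁ × H₂))))
    {x₁ : H₁} (hx : WithLp.toLp 2 (x₁, 0) ∈ (blockOpL A B C D).domain)
    (y : (blockOpL A B C D)†.domain) :
    ⟪((blockOpL A B C D)† y).fst, x₁⟫_ℂ =
      ⟪(y : WithLp 2 (K₁ × K₂)).fst, A ⟨x₁, hx.1.1⟩⟫_ℂ +
        ⟪(y : WithLp 2 (K₁ × K₂)).snd, C ⟨x₁, hx.1.2⟩⟫_ℂ := by
  have h := adjoint_isFormalAdjoint hdense y ⟨_, hx⟩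
  rw [blockOpL_apply_inl] at h
  simpa using h

theorem inner_adjoint_blockOpL_inr
    (hdense : Dense ((blockOpL A B C D).domain : Set (WithLp 2 (H₁ × H₂))))
    {x₂ : H₂} (hx : WithLp.toLp 2 (0, x₂) ∈ (blockOpL A B C D).domain)
    (y : (blockOpL A B C D)†.domain) :
    ⟪((blockOpL A B C D)† y).snd, x₂⟫_ℂ =
      ⟪(y : WithLp 2 (K₁ × K₂)).fst, B ⟨x₂, hx.2.1⟩⟫_ℂ +
        ⟪(y : WithLp 2 (K₁ × K₂)).snd, D ⟨x₂, hx.2.2⟩⟫_ℂ := by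
  have h := adjoint_isFormalAdjoint hdense y ⟨_, hx⟩
  rw [blockOpL_apply_inr] at h
  simpa using h

theorem mem_adjoint_domain_of_toLp_inl_mem (hAC : A.domain ≤ C.domain)
    (hBD : B.domain ≤ D.domain)
    (hdense : Dense ((blockOpL A B C D).domain : Set (WithLp 2 (H₁ × H₂)))) {y₁ : K₁}
    (hy : WithLp.toLp 2 (y₁, 0) ∈ (blockOpL A B C D)†.domain) :
    y₁ ∈ A†.domain ∧ y₁ ∈ B†.domain := by
  set z := (blockOpL A B C D)† ⟨_, hy⟩
  constructor
  · refine mem_adjoint_domain_of_exists _ ⟨z.fst, fun x => ?_⟩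
    have hx : WithLp.toLp 2 ((x : H₁), 0) ∈ (blockOpL A B C D).domain :=
      ⟨⟨x.2, hAC x.2⟩, zero_mem _, zero_mem _⟩
    simpa using inner_adjoint_blockOpL_inl hdense hx ⟨_, hy⟩
  · refine mem_adjoint_domain_of_exists _ ⟨z.snd, fun x => ?_⟩
    have hx : WithLp.toLp 2 (0, (x : H₂)) ∈ (blockOpL A B C D).domain :=
      ⟨⟨zero_mem _, zero_mem _⟩, x.2, hBD x.2⟩
    simpa using inner_adjoint_blockOpL_inr hdense hx ⟨_, hy⟩

theorem mem_adjoint_domain_of_toLp_inr_mem (hCA : C.domain ≤ A.domain)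
    (hDB : D.domain ≤ B.domain)
    (hdense : Dense ((blockOpL A B C D).domain : Set (WithLp 2 (H₁ × H₂)))) {y₂ : K₂}
    (hy : WithLp.toLp 2 (0, y₂) ∈ (blockOpL A B C D)†.domain) :
    y₂ ∈ C†.domain ∧ y₂ ∈ D†.domain := by
  set z := (blockOpL A B C D)† ⟨_, hy⟩
  constructor
  · refine mem_adjoint_domain_of_exists _ ⟨z.fst, fun x => ?_⟩
    have hx : WithLp.toLp 2 ((x : H₁), 0) ∈ (blockOpL A B C D).domain :=
      ⟨⟨hCA x.2, x.2⟩, zero_mem _, zero_mem _⟩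
    simpa using inner_adjoint_blockOpL_inl hdense hx ⟨_, hy⟩
  · refine mem_adjoint_domain_of_exists _ ⟨z.snd, fun x => ?_⟩
    have hx : WithLp.toLp 2 (0, (x : H₂)) ∈ (blockOpL A B C D).domain :=
      ⟨⟨zero_mem _, zero_mem _⟩, hDB x.2, x.2⟩
    simpa using inner_adjoint_blockOpL_inr hdense hx ⟨_, hy⟩

theorem adjoint_domain_le_of_hasMatrixRepL (hAC : A.domain = C.domain)
    (hBD : B.domain = D.domain)
    (hdense : Dense ((blockOpL A B C D).domain : Set (WithLp 2 (H₁ × H₂))))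
    (hrep : HasMatrixRepL (blockOpL A B C D)†) :
    (blockOpL A B C D)†.domain ≤ (blockOpL A† C† B† D†).domain := by
  intro y hy
  obtain ⟨hy₁, hy₂⟩ := hrep.mem_domain_iff.mp hy
  obtain ⟨hA, hB⟩ := mem_adjoint_domain_of_toLp_inl_mem hAC.le hBD.le hdense hy₁
  obtain ⟨hC, hD⟩ := mem_adjoint_domain_of_toLp_inr_mem hAC.ge hBD.ge hdense hy₂
  exact ⟨⟨hA, hB⟩, hC, hD⟩

end Adjoint

end

theorem statement5 {H₁ H₂ : Type*}
    [NormedAddCommGroup H₁] [InnerProductSpace ℂ H₁] [CompleteSpace H₁]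
    [NormedAddCommGroup H₂] [InnerProductSpace ℂ H₂] [CompleteSpace H₂]
    (A : H₁ →ₗ.[ℂ] H₁) (B : H₂ →ₗ.[ℂ] H₁) (C : H₁ →ₗ.[ℂ] H₂) (D : H₂ →ₗ.[ℂ] H₂)
    (hAC : A.domain = C.domain) (hBD : B.domain = D.domain)
    (h1 : Dense (A.domain : Set H₁)) (h2 : Dense (B.domain : Set H₂)) :
    blockOpL A.adjoint C.adjoint B.adjoint D.adjoint = (blockOpL A B C D).adjoint ↔
      HasMatrixRepL ((blockOpL A B C D).adjoint) := by
  have hdense := dense_blockOpL_domain hAC hBD h1 h2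
  have hle : blockOpL A† C† B† D† ≤ (blockOpL A B C D)† :=
    (blockOpL_isFormalAdjoint h1 h2 (hAC ▸ h1) (hBD ▸ h2)).le_adjoint hdense
  refine ⟨fun h => ⟨_, _, _, _, h.symm⟩, fun hrep => ?_⟩
  exact eq_of_le_of_domain_eq hle
    (hle.1.antisymm (adjoint_domain_le_of_hasMatrixRepL hAC hBD hdense hrep))

end BlockOp
end

section
/- Let H₁ be a complex Hilbert space and let A be a closed, densely defined linear operator on H₁ with D(A) ≠ H₁. Consider the block operator matrix 𝒜 := [[A, 0],[A, 0]] on H₁ × H₁, i.e., the operator with domain D(𝒜) = D(A) × H₁ acting by (x₁, x₂) ↦ (Ax₁, Ax₁). Then: (i) 𝒜 is a closed operator; (ii) D(𝒜*) = {(f₁, f₂) ∈ H₁ × H₁ : f₁ + f₂ ∈ D(A*)} and 𝒜*(f₁, f₂) = (A*(f₁ + f₂), 0); (iii) 𝒜* has no matrix representation, i.e., there exists (f₁, f₂) ∈ D(𝒜*) with (f₁, 0) ∉ D(𝒜*). -/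
open LinearPMap
open scoped LinearPMap

/-! The operator `𝒜` is `A` applied to the first coordinate, followed by the diagonal embedding
`y ↦ (y, y)`. Hence its graph is cut out by the closed conditions `(x₁, y₁) ∈ graph A` and
`y₁ = y₂`, and `⟪(f₁, f₂), 𝒜 x⟫ = ⟪f₁ + f₂, A x₁⟫`, which identifies `𝒜*`. For (iii) take
`(g, -g)` with `g ∉ D(A*)`. Such a `g` exists: were `A*` everywhere defined, it would be bounded by
the closed graph theorem, `A` would agree on `D(A)` with the bounded operator `(A*)*`, and since `A`
is closed its domain would be closed, hence equal to `H₁` by density. -/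

open scoped InnerProductSpace

namespace BlockOp

theorem isClosed_domain_of_isClosed_of_eqOn {R E F : Type*} [CommRing R]
    [AddCommGroup E] [Module R E] [TopologicalSpace E]
    [AddCommGroup F] [Module R F] [TopologicalSpace F]
    {T : E →ₗ.[R] F} (hT : T.IsClosed) (h : E →L[R] F)
    (hTh : ∀ x : T.domain, T x = h x) : IsClosed (T.domain : Set E) := by
  have hdom : (T.domain : Set E) = (fun x => (x, h x)) ⁻¹' (T.graph : Set (E × F)) := by
    ext x
    simp only [Set.mem_preimage, SetLike.mem_coe, mem_graph_iff]
    refine ⟨fun hx => ⟨⟨x, hx⟩, rfl, hTh ⟨x, hx⟩⟩, ?_⟩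
    rintro ⟨y, rfl, -⟩
    exact y.2
  rw [hdom]
  exact hT.preimage (continuous_id.prodMk h.continuous)

section AdjointDomain

variable {𝕜 E F : Type*} [RCLike 𝕜]
  [NormedAddCommGroup E] [InnerProductSpace 𝕜 E] [CompleteSpace E]
  [NormedAddCommGroup F] [InnerProductSpace 𝕜 F] [CompleteSpace F]

theorem exists_eq_continuous_of_adjoint_domain_eq_top {T : E →ₗ.[𝕜] F}
    (hT : Dense (T.domain : Set E)) (hadj : T†.domain = ⊤) :
    ∃ h : E →L[𝕜] F, ∀ x : T.domain, T x = h x := by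
  let g : F →ₗ[𝕜] E := T†.toFun ∘ₗ (LinearEquiv.ofTop _ hadj).symm.toLinearMap
  have hgraph : g.graph = T†.graph := by
    ext ⟨y, z⟩
    simp only [LinearMap.mem_graph_iff, mem_graph_iff]
    constructor
    · rintro rfl
      exact ⟨_, rfl, rfl⟩
    · rintro ⟨y', rfl, rfl⟩
      rfl
  have hg : IsClosed (g.graph : Set (F × E)) := by
    rw [hgraph]; exact adjoint_isClosed hT
  refine ⟨ContinuousLinearMap.adjoint (ContinuousLinearMap.ofIsClosedGraph hg),
    fun x => ext_inner_left 𝕜 fun y => ?_⟩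
  rw [ContinuousLinearMap.adjoint_inner_right, ContinuousLinearMap.coeFn_ofIsClosedGraph]
  exact ((adjoint_isFormalAdjoint hT) ⟨y, hadj ▸ Submodule.mem_top⟩ x).symm

theorem adjoint_domain_ne_top {T : E →ₗ.[𝕜] F} (hT : T.IsClosed)
    (hdense : Dense (T.domain : Set E)) (hne : T.domain ≠ ⊤) : T†.domain ≠ ⊤ := by
  intro hadj
  obtain ⟨h, hTh⟩ := exists_eq_continuous_of_adjoint_domain_eq_top hdense hadj
  have hclosed := isClosed_domain_of_isClosed_of_eqOn hT h hTh
  exact hne (SetLike.coe_injective (hclosed.closure_eq.symm.trans hdense.closure_eq))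

end AdjointDomain

section BlockDomain

variable {H₁ H₂ K₁ K₂ : Type*}
  [NormedAddCommGroup H₁] [InnerProductSpace ℂ H₁] [NormedAddCommGroup H₂] [InnerProductSpace ℂ H₂]
  [NormedAddCommGroup K₁] [InnerProductSpace ℂ K₁] [NormedAddCommGroup K₂] [InnerProductSpace ℂ K₂]

theorem mem_domain_blockOpL_iff (A : H₁ →ₗ.[ℂ] K₁) (B : H₂ →ₗ.[ℂ] K₁) (C : H₁ →ₗ.[ℂ] K₂)
    (D : H₂ →ₗ.[ℂ] K₂) (v : WithLp 2 (H₁ × H₂)) :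
    v ∈ (blockOpL A B C D).domain ↔
      v.fst ∈ A.domain ⊓ C.domain ∧ v.snd ∈ B.domain ⊓ D.domain :=
  Submodule.mem_prod

end BlockDomain

section FirstColumn

variable {H X K : Type*}
  [NormedAddCommGroup H] [InnerProductSpace ℂ H] [NormedAddCommGroup X] [InnerProductSpace ℂ X]
  [NormedAddCommGroup K] [InnerProductSpace ℂ K]
  (A : H →ₗ.[ℂ] K)

theorem mem_domain_blockOpL_self_zero_iff (v : WithLp 2 (H × X)) :
    v ∈ (blockOpL A (0 : X →ₗ.[ℂ] K) A 0).domain ↔ v.fst ∈ A.domain := by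
  simp [mem_domain_blockOpL_iff]

theorem blockOpL_self_zero_apply (v : (blockOpL A (0 : X →ₗ.[ℂ] K) A 0).domain)
    (hv : (v : WithLp 2 (H × X)).fst ∈ A.domain) :
    blockOpL A (0 : X →ₗ.[ℂ] K) A 0 v = WithLp.toLp 2 (A ⟨_, hv⟩, A ⟨_, hv⟩) := by
  change WithLp.toLp 2 (A ⟨_, hv⟩ + 0, A ⟨_, hv⟩ + 0) = _
  simp only [add_zero]

theorem inner_blockOpL_self_zero (f : WithLp 2 (K × K))
    (v : (blockOpL A (0 : X →ₗ.[ℂ] K) A 0).domain) (hv : (v : WithLp 2 (H × X)).fst ∈ A.domain) :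
    ⟪f, blockOpL A (0 : X →ₗ.[ℂ] K) A 0 v⟫_ℂ = ⟪f.fst + f.snd, A ⟨_, hv⟩⟫_ℂ := by
  rw [blockOpL_self_zero_apply A v hv, WithLp.prod_inner_apply, inner_add_left]
  rfl

theorem isClosed_blockOpL_self_zero (hA : A.IsClosed) :
    (blockOpL A (0 : X →ₗ.[ℂ] K) A 0).IsClosed := by
  have hgraph : ((blockOpL A (0 : X →ₗ.[ℂ] K) A 0).graph :
      Set (WithLp 2 (H × X) × WithLp 2 (K × K))) =
      (fun p => (p.1.fst, p.2.fst)) ⁻¹' A.graph ∩ {p | p.2.fst = p.2.snd} := by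
    ext ⟨v, w⟩
    simp only [SetLike.mem_coe, mem_graph_iff, Set.mem_inter_iff, Set.mem_preimage,
      Set.mem_ofPred_eq, Subtype.exists]
    constructor
    · rintro ⟨v, hv, rfl, rfl⟩
      have h := (mem_domain_blockOpL_self_zero_iff A v).1 hv
      rw [blockOpL_self_zero_apply A ⟨v, hv⟩ h]
      exact ⟨⟨_, h, rfl, rfl⟩, rfl⟩
    · rintro ⟨⟨x, hx, rfl, hAx⟩, hw⟩
      refine ⟨v, (mem_domain_blockOpL_self_zero_iff A v).2 hx, rfl, ?_⟩
      rw [blockOpL_self_zero_apply A _ hx, hAx]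
      nth_rw 2 [hw]
      rfl
  rw [LinearPMap.IsClosed, hgraph]
  exact (hA.preimage (by fun_prop)).inter (isClosed_eq (by fun_prop) (by fun_prop))

theorem dense_domain_blockOpL_self_zero (hdense : Dense (A.domain : Set H)) :
    Dense ((blockOpL A (0 : X →ₗ.[ℂ] K) A 0).domain : Set (WithLp 2 (H × X))) := by
  rw [show ((blockOpL A (0 : X →ₗ.[ℂ] K) A 0).domain : Set (WithLp 2 (H × X))) =
    WithLp.fst ⁻¹' A.domain from Set.ext (mem_domain_blockOpL_self_zero_iff A)]
  exact hdense.preimage (isOpenMap_fst.comp (WithLp.prodContinuousLinearEquiv 2 ℂ H X).isOpenMap)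

variable [CompleteSpace H]

theorem inner_toLp_adjoint_add_zero (hdense : Dense (A.domain : Set H)) (f : WithLp 2 (K × K))
    (hf : f.fst + f.snd ∈ A†.domain) (v : (blockOpL A (0 : X →ₗ.[ℂ] K) A 0).domain) :
    ⟪WithLp.toLp 2 (A† ⟨_, hf⟩, (0 : X)), v⟫_ℂ = ⟪f, blockOpL A (0 : X →ₗ.[ℂ] K) A 0 v⟫_ℂ := by
  have hv := (mem_domain_blockOpL_self_zero_iff A _).1 v.2
  rw [inner_blockOpL_self_zero A f v hv, WithLp.prod_inner_apply, inner_zero_left, add_zero]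
  exact adjoint_isFormalAdjoint hdense ⟨_, hf⟩ ⟨_, hv⟩

variable [CompleteSpace X]

theorem mem_adjoint_domain_blockOpL_self_zero_iff (hdense : Dense (A.domain : Set H))
    (f : WithLp 2 (K × K)) :
    f ∈ (blockOpL A (0 : X →ₗ.[ℂ] K) A 0)†.domain ↔ f.fst + f.snd ∈ A†.domain := by
  refine ⟨fun hf => mem_adjoint_domain_of_exists _ ?_,
    fun hf => mem_adjoint_domain_of_exists _ ⟨_, inner_toLp_adjoint_add_zero A hdense f hf⟩⟩
  refine ⟨((blockOpL A (0 : X →ₗ.[ℂ] K) A 0)† ⟨f, hf⟩).fst, fun x => ?_⟩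
  have hx : WithLp.toLp 2 ((x : H), (0 : X)) ∈ (blockOpL A (0 : X →ₗ.[ℂ] K) A 0).domain :=
    (mem_domain_blockOpL_self_zero_iff A _).2 x.2
  have h := adjoint_isFormalAdjoint (dense_domain_blockOpL_self_zero A hdense) ⟨f, hf⟩ ⟨_, hx⟩
  rw [inner_blockOpL_self_zero A f ⟨_, hx⟩ x.2, WithLp.prod_inner_apply, inner_zero_right,
    add_zero] at h
  exact h

theorem adjoint_blockOpL_self_zero_apply (hdense : Dense (A.domain : Set H))
    (f : (blockOpL A (0 : X →ₗ.[ℂ] K) A 0)†.domain)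
    (hf : (f : WithLp 2 (K × K)).fst + (f : WithLp 2 (K × K)).snd ∈ A†.domain) :
    (blockOpL A (0 : X →ₗ.[ℂ] K) A 0)† f = WithLp.toLp 2 (A† ⟨_, hf⟩, 0) :=
  adjoint_apply_eq (dense_domain_blockOpL_self_zero A hdense) f
    (inner_toLp_adjoint_add_zero A hdense f hf)

end FirstColumn

theorem statement6 {H₁ : Type*}
    [NormedAddCommGroup H₁] [InnerProductSpace ℂ H₁] [CompleteSpace H₁]
    (A : H₁ →ₗ.[ℂ] H₁) (hA : A.IsClosed) (hdense : Dense (A.domain : Set H₁))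
    (hne : A.domain ≠ ⊤) :
    (blockOpL A (0 : H₁ →ₗ.[ℂ] H₁) A (0 : H₁ →ₗ.[ℂ] H₁)).IsClosed ∧
    (∀ f₁ f₂ : H₁,
      (WithLp.linearEquiv 2 ℂ (H₁ × H₁)).symm (f₁, f₂) ∈
          (blockOpL A (0 : H₁ →ₗ.[ℂ] H₁) A (0 : H₁ →ₗ.[ℂ] H₁)).adjoint.domain ↔
        f₁ + f₂ ∈ A.adjoint.domain) ∧
    (∀ (f₁ f₂ : H₁)
      (hf : (WithLp.linearEquiv 2 ℂ (H₁ × H₁)).symm (f₁, f₂) ∈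
        (blockOpL A (0 : H₁ →ₗ.[ℂ] H₁) A (0 : H₁ →ₗ.[ℂ] H₁)).adjoint.domain)
      (hf' : f₁ + f₂ ∈ A.adjoint.domain),
      (blockOpL A (0 : H₁ →ₗ.[ℂ] H₁) A (0 : H₁ →ₗ.[ℂ] H₁)).adjoint
          ⟨(WithLp.linearEquiv 2 ℂ (H₁ × H₁)).symm (f₁, f₂), hf⟩ =
        (WithLp.linearEquiv 2 ℂ (H₁ × H₁)).symm (A.adjoint ⟨f₁ + f₂, hf'⟩, 0)) ∧
    (∃ f₁ f₂ : H₁,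
      (WithLp.linearEquiv 2 ℂ (H₁ × H₁)).symm (f₁, f₂) ∈
        (blockOpL A (0 : H₁ →ₗ.[ℂ] H₁) A (0 : H₁ →ₗ.[ℂ] H₁)).adjoint.domain ∧
      (WithLp.linearEquiv 2 ℂ (H₁ × H₁)).symm (f₁, 0) ∉
        (blockOpL A (0 : H₁ →ₗ.[ℂ] H₁) A (0 : H₁ →ₗ.[ℂ] H₁)).adjoint.domain) := by
  refine ⟨isClosed_blockOpL_self_zero A hA, fun f₁ f₂ => mem_adjoint_domain_blockOpL_self_zero_iff
    A hdense _, fun f₁ f₂ hf hf' => adjoint_blockOpL_self_zero_apply A hdense ⟨_, hf⟩ hf', ?_⟩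
  obtain ⟨g, hg⟩ := SetLike.exists_not_mem_of_ne_top _ (adjoint_domain_ne_top hA hdense hne)
  refine ⟨g, -g, (mem_adjoint_domain_blockOpL_self_zero_iff A hdense _).2 ?_, fun h => hg ?_⟩
  · simp
  · simpa using (mem_adjoint_domain_blockOpL_self_zero_iff A hdense _).1 h

end BlockOp
end

section
/- Let H₁, H₂ be complex Hilbert spaces, H := H₁ × H₂, and let 𝒜 = [[A, B],[C, D]] be a block operator matrix satisfying the basic assumptions, with A = A* and D = D*. Then the induced operator 𝒜 is self-adjoint if one of the following holds: (a) C is A-bounded with relative bound < 1 and B is D-bounded with relative bound ≤ 1; (b) C is A-bounded with relative bound ≤ 1 and B is D-bounded with relative bound < 1. -/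
open LinearPMap
open scoped LinearPMap

/-! `𝒜` is symmetric because `A` and `D` are and `B ⊆ C*`, and a densely defined symmetric
operator `T` is self-adjoint as soon as `T - μ` and `T - μ̄` are onto for a single `μ`. Take
`μ = ±im` with `m > 0`. Since `A` and `D` are self-adjoint, `A - μ` and `D - μ` have bounded
inverses `R_A`, `R_D` with `‖R_A‖, ‖R_D‖ ≤ 1/m` and `‖A R_A‖, ‖D R_D‖ ≤ 1`, so the relative
bounds give `‖C R_A‖ ≤ a/m + b` and `‖B R_D‖ ≤ a'/m + b'`. Either hypothesis allows `b b' < 1`,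
hence for large `m` the product is `< 1`, the Schur complement `1 - C R_A B R_D` is invertible
by a Neumann series, and `(𝒜 - μ) x = z` can be solved explicitly. -/

open scoped InnerProductSpace ComplexConjugate NNReal

namespace LinearPMap

section FormalAdjoint

variable {𝕜 E F : Type*} [RCLike 𝕜]
  [NormedAddCommGroup E] [InnerProductSpace 𝕜 E] [CompleteSpace E]
  [NormedAddCommGroup F] [InnerProductSpace 𝕜 F]

theorem isFormalAdjoint_of_le_adjoint {B : F →ₗ.[𝕜] E} {C : E →ₗ.[𝕜] F}
    (hC : Dense (C.domain : Set E)) (h : B ≤ C†) : B.IsFormalAdjoint C := fun u v => by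
  rw [h.2 (x := u) (y := ⟨u, h.1 u.2⟩) rfl]
  exact adjoint_isFormalAdjoint hC _ v

theorem _root_.IsSelfAdjoint.isFormalAdjoint {A : E →ₗ.[𝕜] E} (hA : IsSelfAdjoint A) :
    A.IsFormalAdjoint A := by
  simpa only [isSelfAdjoint_def.mp hA] using adjoint_isFormalAdjoint hA.dense_domain

theorem _root_.IsSelfAdjoint.exists_mem_domain_of_inner {A : E →ₗ.[𝕜] E} (hA : IsSelfAdjoint A)
    {v w : E} (h : ∀ x : A.domain, inner 𝕜 w (x : E) = inner 𝕜 v (A x)) :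
    ∃ hv : v ∈ A.domain, A ⟨v, hv⟩ = w := by
  have hv : v ∈ A†.domain := mem_adjoint_domain_of_exists _ ⟨w, h⟩
  have hAv : A† ⟨v, hv⟩ = w := adjoint_apply_eq hA.dense_domain _ h
  have hAA : A† = A := isSelfAdjoint_def.mp hA
  have hv' : v ∈ A.domain := hAA ▸ hv
  exact ⟨hv', (hAA.le.2 (x := ⟨v, hv⟩) (y := ⟨v, hv'⟩) rfl).symm.trans hAv⟩

end FormalAdjoint

section ClosedRange

variable {𝕜 E : Type*} [NontriviallyNormedField 𝕜] [NormedAddCommGroup E] [NormedSpace 𝕜 E]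
  [CompleteSpace E]

theorem IsClosed.isClosed_range_sub_smul {A : E →ₗ.[𝕜] E} (hA : A.IsClosed) {μ : 𝕜} {c : ℝ≥0}
    (hc : ∀ x : A.domain, ‖(x : E)‖ ≤ c * ‖A x - μ • (x : E)‖) :
    _root_.IsClosed (Set.range fun x : A.domain => A x - μ • (x : E)) := by
  -- The graph is complete, and `(x, A x) ↦ A x - μ x` is bounded below on it.
  have : CompleteSpace A.graph := hA.completeSpace_coe
  let Φ : A.graph →L[𝕜] E :=
    (ContinuousLinearMap.snd 𝕜 E E - μ • ContinuousLinearMap.fst 𝕜 E E).comp A.graph.subtypeL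
  have hrange : Set.range Φ = Set.range fun x : A.domain => A x - μ • (x : E) := by
    ext y
    constructor
    · rintro ⟨⟨g, hg⟩, rfl⟩
      obtain ⟨x, hx₁, hx₂⟩ := (A.mem_graph_iff).mp hg
      exact ⟨x, by simp [Φ, hx₁, hx₂]⟩
    · rintro ⟨x, rfl⟩
      exact ⟨⟨_, A.mem_graph x⟩, rfl⟩
  have hbound : ∀ g, ‖g‖ ≤ ((1 + (1 + ‖μ‖₊) * c : ℝ≥0) : ℝ) * ‖Φ g‖ := by
    rintro ⟨⟨g₁, g₂⟩, hg⟩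
    obtain ⟨x, rfl, rfl⟩ := (A.mem_graph_iff).mp hg
    have hΦ : Φ ⟨_, hg⟩ = A x - μ • (x : E) := rfl
    have hAx : ‖A x‖ ≤ ‖A x - μ • (x : E)‖ + ‖μ‖ * ‖(x : E)‖ := by
      simpa [norm_smul] using norm_le_norm_sub_add (A x) (μ • (x : E))
    have hx := hc x
    rw [hΦ, Submodule.coe_norm, Prod.norm_def]
    push_cast
    have hL := norm_nonneg (A x - μ • (x : E))
    have hμx := mul_le_mul_of_nonneg_left hx (norm_nonneg μ)
    refine max_le (hx.trans ?_) (hAx.trans ?_)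
    · exact mul_le_mul_of_nonneg_right (by nlinarith [c.2, norm_nonneg μ]) hL
    · nlinarith [mul_nonneg c.2 hL]
  rw [← hrange]
  exact (Φ.antilipschitz_of_bound hbound).isClosed_range Φ.uniformContinuous

end ClosedRange

section Symmetric

variable {E : Type*} [NormedAddCommGroup E] [InnerProductSpace ℂ E]

theorem IsFormalAdjoint.norm_sub_smul_sq {A : E →ₗ.[ℂ] E} (hA : A.IsFormalAdjoint A) {μ : ℂ}
    (hμ : μ.re = 0) (x : A.domain) :
    ‖A x - μ • (x : E)‖ ^ 2 = ‖A x‖ ^ 2 + ‖μ‖ ^ 2 * ‖(x : E)‖ ^ 2 := by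
  have hreal : (⟪A x, (x : E)⟫_ℂ).im = 0 := by
    rw [← Complex.conj_eq_iff_im, inner_conj_symm]
    exact (hA x x).symm
  have hcross : RCLike.re ⟪A x, μ • (x : E)⟫_ℂ = 0 := by
    simp [hμ, hreal]
  rw [norm_sub_sq (𝕜 := ℂ), hcross, norm_smul, mul_pow]
  ring

theorem IsFormalAdjoint.norm_smul_le_norm_sub_smul {A : E →ₗ.[ℂ] E} (hA : A.IsFormalAdjoint A)
    {μ : ℂ} (hμ : μ.re = 0) (x : A.domain) : ‖μ‖ * ‖(x : E)‖ ≤ ‖A x - μ • (x : E)‖ := by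
  refine (sq_le_sq₀ (by positivity) (norm_nonneg _)).mp ?_
  rw [hA.norm_sub_smul_sq hμ, mul_pow]
  nlinarith [sq_nonneg ‖A x‖]

theorem IsFormalAdjoint.norm_le_norm_sub_smul {A : E →ₗ.[ℂ] E} (hA : A.IsFormalAdjoint A)
    {μ : ℂ} (hμ : μ.re = 0) (x : A.domain) : ‖A x‖ ≤ ‖A x - μ • (x : E)‖ := by
  refine (sq_le_sq₀ (norm_nonneg _) (norm_nonneg _)).mp ?_
  rw [hA.norm_sub_smul_sq hμ]
  nlinarith [sq_nonneg (‖μ‖ * ‖(x : E)‖)]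

end Symmetric

section SelfAdjoint

variable {E : Type*} [NormedAddCommGroup E] [InnerProductSpace ℂ E] [CompleteSpace E]

theorem isSelfAdjoint_of_surjective_sub_smul {T : E →ₗ.[ℂ] E} (hdense : Dense (T.domain : Set E))
    (hT : T.IsFormalAdjoint T) {μ : ℂ}
    (hμ : Function.Surjective fun x : T.domain => T x - μ • (x : E))
    (hμ' : Function.Surjective fun x : T.domain => T x - conj μ • (x : E)) :
    IsSelfAdjoint T := by
  have hadj := adjoint_isFormalAdjoint hdense
  have hsolve : ∀ y : T†.domain, ∃ v : T.domain, (v : E) = y ∧ T v = T† y := by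
    intro y
    obtain ⟨v, hv : T v - μ • (v : E) = T† y - μ • (y : E)⟩ := hμ (T† y - μ • (y : E))
    have horth : ∀ z, ⟪(y : E) - v, z⟫_ℂ = 0 := by
      intro z
      obtain ⟨x, rfl⟩ := hμ' z
      have h0 : ⟪(T† y - μ • (y : E)) - (T v - μ • (v : E)), (x : E)⟫_ℂ = 0 := by
        rw [← hv, sub_self, inner_zero_left]
      rw [← h0]
      simp only [inner_sub_left, inner_sub_right, inner_smul_left, inner_smul_right, hadj y x,
        hT v x]
      ring
    have hyv : (y : E) = v := sub_eq_zero.mp (inner_self_eq_zero.mp (horth _))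
    refine ⟨v, hyv.symm, ?_⟩
    rwa [← hyv, sub_left_inj] at hv
  have hle : T† ≤ T := by
    refine ⟨fun y hy => ?_, fun y w hyw => ?_⟩
    · obtain ⟨v, hv, -⟩ := hsolve ⟨y, hy⟩
      rw [← show (v : E) = y from hv]
      exact v.2
    · obtain ⟨v, hv, hTv⟩ := hsolve y
      rw [← hTv, show w = v from Subtype.ext (hyw.symm.trans hv.symm)]
  exact isSelfAdjoint_def.mpr (le_antisymm hle (hT.le_adjoint hdense))

theorem _root_.IsSelfAdjoint.surjective_sub_smul {A : E →ₗ.[ℂ] E} (hA : IsSelfAdjoint A) {μ : ℂ}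
    (hre : μ.re = 0) (hμ : μ ≠ 0) : Function.Surjective fun x : A.domain => A x - μ • (x : E) := by
  let L : A.domain →ₗ[ℂ] E := A.toFun - μ • A.domain.subtype
  have hL : ∀ x, L x = A x - μ • (x : E) := fun _ => rfl
  have hμpos : 0 < ‖μ‖ := norm_pos_iff.mpr hμ
  have hclosed : _root_.IsClosed (LinearMap.range L : Set E) := by
    refine hA.isClosed.isClosed_range_sub_smul (c := ‖μ‖₊⁻¹) fun x => ?_
    rw [NNReal.coe_inv, coe_nnnorm, le_inv_mul_iff₀ hμpos]
    exact hA.isFormalAdjoint.norm_smul_le_norm_sub_smul hre x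
  -- `v ⊥ ran (A - μ)` puts `v` in `ker (A* - μ̄) = ker (A - μ̄)`, which is trivial.
  have horth : (LinearMap.range L)ᗮ = ⊥ := by
    refine (Submodule.eq_bot_iff _).mpr fun v hv => ?_
    have hinner : ∀ x : A.domain, ⟪conj μ • v, (x : E)⟫_ℂ = ⟪v, A x⟫_ℂ := by
      intro x
      have h0 : ⟪v, L x⟫_ℂ = 0 :=
        inner_eq_zero_symm.mp ((Submodule.mem_orthogonal _ v).mp hv _ ⟨x, rfl⟩)
      rw [hL, inner_sub_right, inner_smul_right] at h0
      rw [inner_smul_left, Complex.conj_conj]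
      linear_combination -h0
    obtain ⟨hv, hAv⟩ := hA.exists_mem_domain_of_inner hinner
    have h := hA.isFormalAdjoint.norm_smul_le_norm_sub_smul (μ := conj μ) (by simpa using hre)
      ⟨v, hv⟩
    rw [hAv, sub_self, norm_zero, Complex.norm_conj] at h
    exact norm_le_zero_iff.mp (le_of_mul_le_mul_left (by simpa using h) hμpos)
  have htop : LinearMap.range L = ⊤ := by
    rw [← hclosed.submodule_topologicalClosure_eq]
    exact Submodule.topologicalClosure_eq_top_iff.mpr horth
  exact LinearMap.range_eq_top.mp htop

end SelfAdjoint

end LinearPMap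

open Filter Topology in
theorem exists_pos_inv_mul_add_mul_lt_one {a b a' b' : ℝ} (h : b * b' < 1) :
    ∃ m : ℝ, 0 < m ∧ (a * m⁻¹ + b) * (a' * m⁻¹ + b') < 1 := by
  have hlim : Tendsto (fun m : ℝ => (a * m⁻¹ + b) * (a' * m⁻¹ + b')) atTop (𝓝 (b * b')) := by
    simpa using ((tendsto_inv_atTop_zero.const_mul a).add_const b).mul
      ((tendsto_inv_atTop_zero.const_mul a').add_const b')
  exact ((eventually_gt_atTop 0).and (hlim.eventually (gt_mem_nhds h))).exists

namespace BlockOp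

section Resolvent

variable {E : Type*} [NormedAddCommGroup E] [InnerProductSpace ℂ E]

theorem IsResolventAt.norm_apply_le {A : E →ₗ.[ℂ] E} (hA : A.IsFormalAdjoint A) {μ : ℂ}
    (hre : μ.re = 0) (hμ : μ ≠ 0) {R : E →L[ℂ] E} (hR : IsResolventAt A μ R) (z : E) :
    ‖R z‖ ≤ ‖μ‖⁻¹ * ‖z‖ := by
  rw [le_inv_mul_iff₀ (norm_pos_iff.mpr hμ), ← congrArg norm (hR.right_inv z)]
  exact hA.norm_smul_le_norm_sub_smul hre ⟨R z, hR.mem z⟩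

theorem IsResolventAt.norm_map_apply_le {A : E →ₗ.[ℂ] E} (hA : A.IsFormalAdjoint A) {μ : ℂ}
    (hre : μ.re = 0) {R : E →L[ℂ] E} (hR : IsResolventAt A μ R) (z : E) :
    ‖A ⟨R z, hR.mem z⟩‖ ≤ ‖z‖ := by
  conv_rhs => rw [← hR.right_inv z]
  exact hA.norm_le_norm_sub_smul hre ⟨R z, hR.mem z⟩

variable {G : Type*} [NormedAddCommGroup G] [NormedSpace ℂ G]

theorem RelBound.exists_comp_resolvent {S : E →ₗ.[ℂ] G} {A : E →ₗ.[ℂ] E} {a b : ℝ}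
    (hS : RelBound S A a b) (ha : 0 ≤ a) (hb : 0 ≤ b) (hA : A.IsFormalAdjoint A) {μ : ℂ}
    (hre : μ.re = 0) (hμ : μ ≠ 0) {R : E →L[ℂ] E} (hR : IsResolventAt A μ R) :
    ∃ K : E →L[ℂ] G, (∀ z, K z = S ⟨R z, hS.dom_le (hR.mem z)⟩) ∧ ‖K‖ ≤ a * ‖μ‖⁻¹ + b := by
  let K₀ : E →ₗ[ℂ] G :=
    S.toFun ∘ₗ (R : E →ₗ[ℂ] E).codRestrict S.domain fun z => hS.dom_le (hR.mem z)
  have hbound : ∀ z, ‖K₀ z‖ ≤ (a * ‖μ‖⁻¹ + b) * ‖z‖ := fun z => by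
    have hR₁ := mul_le_mul_of_nonneg_left (hR.norm_apply_le hA hre hμ z) ha
    have hR₂ := mul_le_mul_of_nonneg_left (hR.norm_map_apply_le hA hre z) hb
    calc ‖K₀ z‖ ≤ a * ‖R z‖ + b * ‖A ⟨R z, hR.mem z⟩‖ := hS.bound ⟨R z, hR.mem z⟩
      _ ≤ (a * ‖μ‖⁻¹ + b) * ‖z‖ := by linarith
  exact ⟨K₀.mkContinuous _ hbound, fun _ => rfl,
    LinearMap.mkContinuous_norm_le _ (by positivity) hbound⟩

variable [CompleteSpace E]

theorem mem_resolventSet_of_isSelfAdjoint {A : E →ₗ.[ℂ] E} (hA : IsSelfAdjoint A) {μ : ℂ}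
    (hre : μ.re = 0) (hμ : μ ≠ 0) : μ ∈ resolventSet A := by
  let L : A.domain →ₗ[ℂ] E := A.toFun - μ • A.domain.subtype
  have hlower : ∀ x : A.domain, ‖μ‖ * ‖(x : E)‖ ≤ ‖L x‖ :=
    hA.isFormalAdjoint.norm_smul_le_norm_sub_smul hre
  have hinj : Function.Injective L := by
    refine (injective_iff_map_eq_zero L).mpr fun x hx => ?_
    have h := hlower x
    rw [hx, norm_zero] at h
    exact Subtype.ext (norm_le_zero_iff.mp
      (le_of_mul_le_mul_left (by simpa using h) (norm_pos_iff.mpr hμ)))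
  let e := LinearEquiv.ofBijective L ⟨hinj, hA.surjective_sub_smul hre hμ⟩
  have hbound : ∀ z, ‖(e.symm z : E)‖ ≤ ‖μ‖⁻¹ * ‖z‖ := fun z => by
    rw [le_inv_mul_iff₀ (norm_pos_iff.mpr hμ)]
    calc ‖μ‖ * ‖(e.symm z : E)‖ ≤ ‖L (e.symm z)‖ := hlower _
      _ = ‖z‖ := congrArg norm (e.apply_symm_apply z)
  exact ⟨(A.domain.subtype ∘ₗ e.symm.toLinearMap).mkContinuous _ hbound, fun z => (e.symm z).2,
    fun z => e.apply_symm_apply z, fun x => congrArg Subtype.val (e.symm_apply_apply x)⟩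

end Resolvent

section RelativeBounds

variable {E F G E' F' G' : Type*}
  [NormedAddCommGroup E] [NormedSpace ℂ E] [NormedAddCommGroup F] [NormedSpace ℂ F]
  [NormedAddCommGroup G] [NormedSpace ℂ G] [NormedAddCommGroup E'] [NormedSpace ℂ E']
  [NormedAddCommGroup F'] [NormedSpace ℂ F'] [NormedAddCommGroup G'] [NormedSpace ℂ G']

theorem exists_relBound_mul_lt_one {S : E →ₗ.[ℂ] G} {T : E →ₗ.[ℂ] F} {S' : E' →ₗ.[ℂ] G'}
    {T' : E' →ₗ.[ℂ] F'} (h : IsRelBoundedLt S T 1) (h' : IsRelBoundedLe S' T' 1) :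
    ∃ a b a' b' : ℝ, 0 ≤ a ∧ 0 ≤ b ∧ 0 ≤ a' ∧ 0 ≤ b' ∧
      RelBound S T a b ∧ RelBound S' T' a' b' ∧ b * b' < 1 := by
  obtain ⟨b, hb, hb1, a, ha, hS⟩ := h
  -- any `b' ∈ (1, 1/b)` will do
  obtain ⟨a', ha', hS'⟩ := h' (2 / (1 + b)) (by rw [lt_div_iff₀ (by linarith)]; linarith)
  refine ⟨a, b, a', 2 / (1 + b), ha, hb, ha', by positivity, hS, hS', ?_⟩
  rw [mul_div_assoc', div_lt_one (by linarith)]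
  linarith

end RelativeBounds

section Block

variable {H₁ H₂ K₁ K₂ : Type*}
  [NormedAddCommGroup H₁] [InnerProductSpace ℂ H₁]
  [NormedAddCommGroup H₂] [InnerProductSpace ℂ H₂]
  [NormedAddCommGroup K₁] [InnerProductSpace ℂ K₁]
  [NormedAddCommGroup K₂] [InnerProductSpace ℂ K₂]

theorem blockOpL_apply_s13 (A : H₁ →ₗ.[ℂ] K₁) (B : H₂ →ₗ.[ℂ] K₁) (C : H₁ →ₗ.[ℂ] K₂)
    (D : H₂ →ₗ.[ℂ] K₂) (x : (blockOpL A B C D).domain) :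
    blockOpL A B C D x = WithLp.toLp 2
      (A ⟨(x : WithLp 2 (H₁ × H₂)).fst, x.2.1.1⟩ + B ⟨(x : WithLp 2 (H₁ × H₂)).snd, x.2.2.1⟩,
        C ⟨(x : WithLp 2 (H₁ × H₂)).fst, x.2.1.2⟩ + D ⟨(x : WithLp 2 (H₁ × H₂)).snd, x.2.2.2⟩) :=
  rfl

theorem isFormalAdjoint_blockOpL {A : H₁ →ₗ.[ℂ] K₁} {B : H₂ →ₗ.[ℂ] K₁} {C : H₁ →ₗ.[ℂ] K₂}
    {D : H₂ →ₗ.[ℂ] K₂} {A' : K₁ →ₗ.[ℂ] H₁} {B' : K₂ →ₗ.[ℂ] H₁} {C' : K₁ →ₗ.[ℂ] H₂}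
    {D' : K₂ →ₗ.[ℂ] H₂} (hA : A.IsFormalAdjoint A') (hB : B.IsFormalAdjoint C')
    (hC : C.IsFormalAdjoint B') (hD : D.IsFormalAdjoint D') :
    (blockOpL A B C D).IsFormalAdjoint (blockOpL A' B' C' D') := by
  rintro ⟨x, hx⟩ ⟨y, hy⟩
  rw [blockOpL_apply_s13, blockOpL_apply_s13, WithLp.prod_inner_apply, WithLp.prod_inner_apply]
  simp only [WithLp.ofLp_fst, WithLp.ofLp_snd, inner_add_left, inner_add_right]
  rw [hA ⟨x.fst, hx.1.1⟩ ⟨y.fst, hy.1.1⟩, hB ⟨x.snd, hx.2.1⟩ ⟨y.fst, hy.1.2⟩,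
    hC ⟨x.fst, hx.1.2⟩ ⟨y.snd, hy.2.1⟩, hD ⟨x.snd, hx.2.2⟩ ⟨y.snd, hy.2.2⟩]
  ring

variable [CompleteSpace H₂]

theorem surjective_blockOpL_sub_smul {A : H₁ →ₗ.[ℂ] H₁} {B : H₂ →ₗ.[ℂ] H₁}
    {C : H₁ →ₗ.[ℂ] H₂} {D : H₂ →ₗ.[ℂ] H₂} {μ : ℂ} {R₁ : H₁ →L[ℂ] H₁} {R₂ : H₂ →L[ℂ] H₂}
    (hR₁ : IsResolventAt A μ R₁) (hR₂ : IsResolventAt D μ R₂)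
    (hCA : A.domain ≤ C.domain) (hBD : D.domain ≤ B.domain)
    {K₁ : H₁ →L[ℂ] H₂} {K₂ : H₂ →L[ℂ] H₁} (hK₁ : ∀ z, K₁ z = C ⟨R₁ z, hCA (hR₁.mem z)⟩)
    (hK₂ : ∀ z, K₂ z = B ⟨R₂ z, hBD (hR₂.mem z)⟩) (hK : ‖K₁.comp K₂‖ < 1) :
    Function.Surjective fun x : (blockOpL A B C D).domain =>
      blockOpL A B C D x - μ • (x : WithLp 2 (H₁ × H₂)) := by
  intro z
  obtain ⟨u, hu⟩ : ∃ u, u - K₁ (K₂ u) = z.snd - K₁ z.fst := by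
    obtain ⟨S, hS⟩ := (isUnit_one_sub_of_norm_lt_one hK).exists_right_inv
    exact ⟨S (z.snd - K₁ z.fst), congrArg (fun f => f (z.snd - K₁ z.fst)) hS⟩
  -- With `x₂ = R₂ u` the first row forces `x₁ = R₁ (z₁ - K₂ u)`; the second row is then `hu`.
  refine ⟨⟨WithLp.toLp 2 (R₁ (z.fst - K₂ u), R₂ u),
    ⟨hR₁.mem _, hCA (hR₁.mem _)⟩, hBD (hR₂.mem u), hR₂.mem u⟩, ?_⟩
  refine WithLp.ofLp_injective 2 (Prod.ext ?_ ?_)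
  · show A ⟨R₁ (z.fst - K₂ u), hR₁.mem _⟩ + B ⟨R₂ u, hBD (hR₂.mem u)⟩ - μ • R₁ (z.fst - K₂ u)
      = z.fst
    rw [add_sub_right_comm, hR₁.right_inv, ← hK₂, sub_add_cancel]
  · show C ⟨R₁ (z.fst - K₂ u), hCA (hR₁.mem _)⟩ + D ⟨R₂ u, hR₂.mem u⟩ - μ • R₂ u = z.snd
    rw [add_sub_assoc, hR₂.right_inv, ← hK₁, _root_.map_sub]
    linear_combination (norm := abel) hu

variable [CompleteSpace H₁]

theorem surjective_blockOpL_sub_smul_of_relBound {A : H₁ →ₗ.[ℂ] H₁} {B : H₂ →ₗ.[ℂ] H₁}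
    {C : H₁ →ₗ.[ℂ] H₂} {D : H₂ →ₗ.[ℂ] H₂} (hA : IsSelfAdjoint A) (hD : IsSelfAdjoint D)
    {a b a' b' : ℝ} (ha : 0 ≤ a) (hb : 0 ≤ b) (ha' : 0 ≤ a') (hb' : 0 ≤ b')
    (hC : RelBound C A a b) (hB : RelBound B D a' b') {μ : ℂ} (hre : μ.re = 0) (hμ : μ ≠ 0)
    (hsmall : (a * ‖μ‖⁻¹ + b) * (a' * ‖μ‖⁻¹ + b') < 1) :
    Function.Surjective fun x : (blockOpL A B C D).domain =>
      blockOpL A B C D x - μ • (x : WithLp 2 (H₁ × H₂)) := by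
  obtain ⟨R₁, hR₁⟩ := mem_resolventSet_of_isSelfAdjoint hA hre hμ
  obtain ⟨R₂, hR₂⟩ := mem_resolventSet_of_isSelfAdjoint hD hre hμ
  obtain ⟨K₁, hK₁, hK₁_norm⟩ := hC.exists_comp_resolvent ha hb hA.isFormalAdjoint hre hμ hR₁
  obtain ⟨K₂, hK₂, hK₂_norm⟩ := hB.exists_comp_resolvent ha' hb' hD.isFormalAdjoint hre hμ hR₂
  refine surjective_blockOpL_sub_smul hR₁ hR₂ hC.dom_le hB.dom_le hK₁ hK₂ ?_
  calc ‖K₁.comp K₂‖ ≤ ‖K₁‖ * ‖K₂‖ := K₁.opNorm_comp_le K₂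
    _ ≤ (a * ‖μ‖⁻¹ + b) * (a' * ‖μ‖⁻¹ + b') :=
      mul_le_mul hK₁_norm hK₂_norm (norm_nonneg _) (by positivity)
    _ < 1 := hsmall

end Block

theorem statement13_general {H₁ H₂ : Type*}
    [NormedAddCommGroup H₁] [InnerProductSpace ℂ H₁] [CompleteSpace H₁]
    [NormedAddCommGroup H₂] [InnerProductSpace ℂ H₂] [CompleteSpace H₂]
    (A : H₁ →ₗ.[ℂ] H₁) (B : H₂ →ₗ.[ℂ] H₁) (C : H₁ →ₗ.[ℂ] H₂) (D : H₂ →ₗ.[ℂ] H₂)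
    (hCd : Dense (C.domain : Set H₁)) (hBC : B ≤ C.adjoint)
    (hdense : Dense ((blockOpL A B C D).domain : Set (WithLp 2 (H₁ × H₂))))
    (hA : IsSelfAdjoint A) (hD : IsSelfAdjoint D)
    (h : (IsRelBoundedLt C A 1 ∧ IsRelBoundedLe B D 1) ∨
         (IsRelBoundedLe C A 1 ∧ IsRelBoundedLt B D 1)) :
    IsSelfAdjoint (blockOpL A B C D) := by
  obtain ⟨a, b, a', b', ha, hb, ha', hb', hCA, hBD, hbb'⟩ : ∃ a b a' b' : ℝ,
      0 ≤ a ∧ 0 ≤ b ∧ 0 ≤ a' ∧ 0 ≤ b' ∧ RelBound C A a b ∧ RelBound B D a' b' ∧ b * b' < 1 := by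
    rcases h with ⟨hC, hB⟩ | ⟨hC, hB⟩
    · exact exists_relBound_mul_lt_one hC hB
    · obtain ⟨a', b', a, b, ha', hb', ha, hb, hB, hC, hbb'⟩ := exists_relBound_mul_lt_one hB hC
      exact ⟨a, b, a', b', ha, hb, ha', hb', hC, hB, by rwa [mul_comm]⟩
  obtain ⟨m, hm, hsmall⟩ := exists_pos_inv_mul_add_mul_lt_one (a := a) (a' := a') hbb'
  have hsurj (μ : ℂ) (hre : μ.re = 0) (hμ : ‖μ‖ = m) :=
    surjective_blockOpL_sub_smul_of_relBound hA hD ha hb ha' hb' hCA hBD hre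
      (norm_pos_iff.mp (hμ ▸ hm)) (hμ ▸ hsmall)
  have hBC' : B.IsFormalAdjoint C := isFormalAdjoint_of_le_adjoint hCd hBC
  have hnorm : ‖(m : ℂ) * Complex.I‖ = m := by simp [abs_of_pos hm]
  exact isSelfAdjoint_of_surjective_sub_smul hdense
    (isFormalAdjoint_blockOpL hA.isFormalAdjoint hBC' hBC'.symm hD.isFormalAdjoint)
    (hsurj _ (by simp) hnorm) (hsurj _ (by simp) (by rwa [Complex.norm_conj]))

theorem statement13 {H₁ H₂ : Type*}
    [NormedAddCommGroup H₁] [InnerProductSpace ℂ H₁] [CompleteSpace H₁]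
    [NormedAddCommGroup H₂] [InnerProductSpace ℂ H₂] [CompleteSpace H₂]
    (A : H₁ →ₗ.[ℂ] H₁) (B : H₂ →ₗ.[ℂ] H₁) (C : H₁ →ₗ.[ℂ] H₂) (D : H₂ →ₗ.[ℂ] H₂)
    (hAd : Dense (A.domain : Set H₁)) (hBd : Dense (B.domain : Set H₂))
    (hCd : Dense (C.domain : Set H₁)) (hDd : Dense (D.domain : Set H₂))
    (hAc : A.IsClosable) (hBc : B.IsClosable) (hCc : C.IsClosable) (hDc : D.IsClosable)
    (hAsym : A ≤ A.adjoint) (hBC : B ≤ C.adjoint) (hDsym : D ≤ D.adjoint)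
    (hdense : Dense ((blockOpL A B C D).domain : Set (WithLp 2 (H₁ × H₂))))
    (hA : IsSelfAdjoint A) (hD : IsSelfAdjoint D)
    (h : (IsRelBoundedLt C A 1 ∧ IsRelBoundedLe B D 1) ∨
         (IsRelBoundedLe C A 1 ∧ IsRelBoundedLt B D 1)) :
    IsSelfAdjoint (blockOpL A B C D) :=
  statement13_general A B C D hCd hBC hdense hA hD h

end BlockOp
end
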